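/- In the maximisation variant of the dynamic program, defining M*(v,1) = w_1(v)·m(v) for v ∈ B_l (0 otherwise) and M*(v,n) = w_n(v)·m(v)·max_{(u,v)∈S} M*(u,n-1), the quantity max_{v ∈ B_r} M*(v, N) equals the maximum over all internal trees T with N leaves of ∏_{n=1}^N w_n(L_n(T))·m(L_n(T)). -/

import Mathlib

/-- Full binary trees: every vertex has 0 or 2 children. -/
inductive FBT where
  | leaf : FBT
  | node : FBT → FBT → FBT
deriving DecidableEq

namespace FBT

/-- Depth of a full binary tree. -/
def depth : FBT → ℕ
  | leaf => 0
  | node a b => max a.depth b.depth + 1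

/-- Positions (reversed root-paths: head is the edge nearest the vertex) of the
leaves of `T`, in left-to-right order. -/
def leaves : FBT → List (List Bool)
  | leaf => [[]]
  | node a b => a.leaves.map (· ++ [false]) ++ b.leaves.map (· ++ [true])

/-- Total number of vertices. -/
def numNodes : FBT → ℕ
  | leaf => 1
  | node a b => a.numNodes + b.numNodes + 1

/-- Number of internal (non-leaf) vertices. -/
def internals : FBT → ℕ
  | leaf => 0
  | node a b => a.internals + b.internals + 1

/-- The recursive probability function π of the stick-breaking prior:
`pi l T pos` where `pos` is the (reversed) position of the root of `T`. -/
def pi (l : List Bool → ℝ) : FBT → List Bool → ℝ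
  | leaf, pos => l pos
  | node a b, pos => (1 - l pos) * pi l a (false :: pos) * pi l b (true :: pos)

/-- Probability of an internal tree: `p(T) = π(root)`. -/
def pTree (l : List Bool → ℝ) (T : FBT) : ℝ := pi l T []

/-- The memoized value m̃, with `m̃(parent(root)) = 1`. -/
noncomputable def mt (l : List Bool → ℝ) : List Bool → ℝ
  | [] => 1 - l []
  | (b :: p) => Real.sqrt (mt l p) * (1 - l (b :: p))

/-- The memoized value m at a vertex: `m(v) = m̃(parent v)^(1/2) · l v`. -/
noncomputable def mleaf (l : List Bool → ℝ) : List Bool → ℝ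
  | [] => l []
  | (b :: p) => Real.sqrt (mt l p) * l (b :: p)

/-- `m̃(parent v)`, with the convention `m̃(parent root) = 1`. -/
noncomputable def mparent (l : List Bool → ℝ) : List Bool → ℝ
  | [] => 1
  | (_ :: p) => mt l p

/-- The set of internal trees of the complete binary tree of depth `D`,
i.e. full binary trees of depth at most `D`. -/
def trees : ℕ → Finset FBT
  | 0 => {leaf}
  | (D+1) => insert leaf ((trees D ×ˢ trees D).image (fun p => node p.1 p.2))

/-- Consecutive-leaf pairs of a single tree. -/
def transitions (T : FBT) : Finset (List Bool × List Bool) :=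
  (T.leaves.zip T.leaves.tail).toFinset

/-- The set `S(T_C)` of successive leaf transitions of the complete binary
tree of depth `D`. -/
def S (D : ℕ) : Finset (List Bool × List Bool) := (trees D).biUnion transitions

/-- The left boundary of the complete binary tree of depth `D`. -/
def Bl (D : ℕ) : Finset (List Bool) :=
  (Finset.range (D+1)).image (fun k => List.replicate k false)

/-- The right boundary of the complete binary tree of depth `D`. -/
def Br (D : ℕ) : Finset (List Bool) :=
  (Finset.range (D+1)).image (fun k => List.replicate k true)

/-- The marginalisation dynamic-programming table (indexed from `n = 1`). -/
def M (S : Finset (List Bool × List Bool)) (Bl : Finset (List Bool))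
    (w : ℕ → List Bool → ℝ) (mw : List Bool → ℝ) : ℕ → List Bool → ℝ
  | 0, _ => 0
  | 1, v => if v ∈ Bl then w 1 v * mw v else 0
  | (n+2), v => w (n+2) v * mw v *
      ∑ p ∈ S.filter (fun p => p.2 = v), M S Bl w mw (n+1) p.1

/-- The Viterbi-style max-product dynamic-programming table. -/
def Mstar (S : Finset (List Bool × List Bool)) (Bl : Finset (List Bool))
    (w : ℕ → List Bool → NNReal) (mw : List Bool → NNReal) : ℕ → List Bool → NNReal
  | 0, _ => 0
  | 1, v => if v ∈ Bl then w 1 v * mw v else 0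
  | (n+2), v => w (n+2) v * mw v *
      (S.filter (fun p => p.2 = v)).sup (fun p => Mstar S Bl w mw (n+1) p.1)

/-- The complete binary tree of depth `D`, as a full binary tree. -/
def completeTree : ℕ → FBT
  | 0 => leaf
  | (D+1) => node (completeTree D) (completeTree D)

end FBT

/-!
Unfolding its recursion, `Mstar N v` is the maximum of the weight over the `S`-chains of length
`N` that start in `Bl` and end at `v`, so the theorem says that the `S`-chains from `Bl` to `Br`
are exactly the leaf sequences of the trees of depth at most `D`. Leaf positions are read
leaf-to-root, so their last bit says in which subtree of the root the leaf lies. A transition of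
depth `D + 1` either stays inside one subtree, where dropping the common last bit leaves a
transition of depth `D`, or crosses from the rightmost leaf of the left subtree to the leftmost
leaf of the right one. Hence along a chain from `Bl` to `Br` the last bit switches from `false`
to `true` exactly once, and the two halves, with the last bit dropped, are chains of depth `D`:
by induction, the leaf sequences of the two subtrees.
-/

namespace List

variable {α β : Type*}

theorem mem_zip_tail_cons {a : α} {l : List α} {p : α × α} :
    p ∈ (a :: l).zip l ↔ (p.1 = a ∧ p.2 ∈ l.head?) ∨ p ∈ l.zip l.tail := by
  cases l with
  | nil => simp
  | cons b l => simp only [zip_cons_cons, mem_cons, head?_cons, Option.mem_def,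
      Option.some.injEq, Prod.ext_iff, tail_cons, eq_comm (a := b)]

theorem mem_zip_tail_append {l₁ l₂ : List α} {p : α × α} :
    p ∈ (l₁ ++ l₂).zip (l₁ ++ l₂).tail ↔
      p ∈ l₁.zip l₁.tail ∨ (p.1 ∈ l₁.getLast? ∧ p.2 ∈ l₂.head?) ∨ p ∈ l₂.zip l₂.tail := by
  induction l₁ with
  | nil => simp
  | cons a l ih =>
    cases l with
    | nil => simp [mem_zip_tail_cons, eq_comm]
    | cons b l =>
      rw [cons_append, tail_cons, mem_zip_tail_cons, ih]
      simp only [tail_cons, mem_zip_tail_cons, cons_append, head?_cons, getLast?_cons_cons,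
        or_assoc]

theorem zip_tail_map (f : α → β) (l : List α) :
    (l.map f).zip (l.map f).tail = (l.zip l.tail).map (Prod.map f f) := by
  rw [← map_tail, zip_map]

theorem isChain_mem_zip_tail (l : List α) : l.IsChain fun x y => (x, y) ∈ l.zip l.tail := by
  induction l with
  | nil => exact .nil
  | cons a l ih =>
    refine ih.imp (fun x y h => mem_zip_tail_cons.2 (.inr h)) |>.cons fun y hy => ?_
    exact mem_zip_tail_cons.2 (.inl ⟨rfl, hy⟩)

end List

namespace FBT

open List

theorem mem_trees {D : ℕ} {T : FBT} : T ∈ trees D ↔ T.depth ≤ D := by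
  induction D generalizing T with
  | zero => cases T <;> simp [trees, depth]
  | succ D ih =>
    cases T with
    | leaf => simp [trees, depth]
    | node a b => simp [trees, depth, ih, eq_comm (a := node a b)]

theorem head?_leaves (T : FBT) : ∃ k ≤ T.depth, T.leaves.head? = some (replicate k false) := by
  induction T with
  | leaf => exact ⟨0, le_rfl, rfl⟩
  | node a b iha _ =>
    obtain ⟨k, hk, h⟩ := iha
    exact ⟨k + 1, by simp [depth, hk], by simp [leaves, h, replicate_succ']⟩

theorem getLast?_leaves (T : FBT) :
    ∃ k ≤ T.depth, T.leaves.getLast? = some (replicate k true) := by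
  induction T with
  | leaf => exact ⟨0, le_rfl, rfl⟩
  | node a b _ ihb =>
    obtain ⟨k, hk, h⟩ := ihb
    exact ⟨k + 1, by simp [depth, hk], by simp [leaves, getLast?_append, h, replicate_succ']⟩

theorem mem_Bl {D : ℕ} {x : List Bool} : x ∈ Bl D ↔ ∃ k ≤ D, replicate k false = x := by
  simp [Bl]

theorem mem_Br {D : ℕ} {x : List Bool} : x ∈ Br D ↔ ∃ k ≤ D, replicate k true = x := by
  simp [Br]

theorem mem_Bl_succ {D : ℕ} {x : List Bool} :
    x ∈ Bl (D + 1) ↔ x = [] ∨ ∃ y ∈ Bl D, x = y ++ [false] := by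
  simp only [mem_Bl]
  constructor
  · rintro ⟨_ | k, hk, rfl⟩
    · exact .inl rfl
    · exact .inr ⟨_, ⟨k, by omega, rfl⟩, replicate_succ'⟩
  · rintro (rfl | ⟨_, ⟨k, hk, rfl⟩, rfl⟩)
    · exact ⟨0, by omega, rfl⟩
    · exact ⟨k + 1, by omega, replicate_succ'⟩

theorem concat_true_mem_Br_succ {D : ℕ} {y : List Bool} : y ++ [true] ∈ Br (D + 1) ↔ y ∈ Br D := by
  simp only [mem_Br]
  constructor
  · rintro ⟨_ | k, hk, h⟩
    · simp at h
    · exact ⟨k, by omega, by simpa [replicate_succ'] using h⟩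
  · rintro ⟨k, hk, rfl⟩
    exact ⟨k + 1, by omega, replicate_succ'⟩

theorem concat_false_notMem_Br {D : ℕ} {y : List Bool} : y ++ [false] ∉ Br D := by
  rintro h
  obtain ⟨k, -, hk⟩ := mem_Br.1 h
  simpa using (eq_replicate_iff.1 hk.symm).2 false (by simp)

theorem mem_transitions_node {a b : FBT} {u v : List Bool} :
    (u, v) ∈ transitions (node a b) ↔
      (∃ u' v', (u', v') ∈ transitions a ∧ u = u' ++ [false] ∧ v = v' ++ [false]) ∨
      (∃ u' ∈ a.leaves.getLast?, ∃ v' ∈ b.leaves.head?, u = u' ++ [false] ∧ v = v' ++ [true]) ∨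
      (∃ u' v', (u', v') ∈ transitions b ∧ u = u' ++ [true] ∧ v = v' ++ [true]) := by
  simp only [transitions, leaves, mem_toFinset, mem_zip_tail_append, zip_tail_map, mem_map,
    Prod.exists, Prod.map_apply, Prod.mk.injEq, getLast?_map, Option.mem_def,
    Option.map_eq_some_iff, head?_map]
  grind

theorem transitions_subset_S {D : ℕ} {T : FBT} (hT : T ∈ trees D) : transitions T ⊆ S D :=
  Finset.subset_biUnion_of_mem transitions hT

theorem S_zero : S 0 = ∅ := rfl

theorem mem_S_succ {D : ℕ} {u v : List Bool} (h : (u, v) ∈ S (D + 1)) :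
    (∃ c u' v', (u', v') ∈ S D ∧ u = u' ++ [c] ∧ v = v' ++ [c]) ∨
      (∃ u' ∈ Br D, ∃ v' ∈ Bl D, u = u' ++ [false] ∧ v = v' ++ [true]) := by
  obtain ⟨T, hT, huv⟩ := Finset.mem_biUnion.1 h
  cases T with
  | leaf => simp [transitions, leaves] at huv
  | node a b =>
    obtain ⟨ha, hb⟩ : a.depth ≤ D ∧ b.depth ≤ D := by simpa [depth] using mem_trees.1 hT
    rcases mem_transitions_node.1 huv with ⟨u', v', huv', rfl, rfl⟩ | ⟨u', hu', v', hv', rfl, rfl⟩ |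
      ⟨u', v', huv', rfl, rfl⟩
    · exact .inl ⟨false, u', v', transitions_subset_S (mem_trees.2 ha) huv', rfl, rfl⟩
    · obtain ⟨k, hk, hka⟩ := getLast?_leaves a
      obtain ⟨j, hj, hjb⟩ := head?_leaves b
      refine .inr ⟨u', mem_Br.2 ⟨k, hk.trans ha, ?_⟩, v', mem_Bl.2 ⟨j, hj.trans hb, ?_⟩, rfl, rfl⟩
      · simpa [hka] using hu'
      · simpa [hjb] using hv'
    · exact .inl ⟨true, u', v', transitions_subset_S (mem_trees.2 hb) huv', rfl, rfl⟩

theorem ne_nil_of_mem_S {D : ℕ} {u v : List Bool} (h : (u, v) ∈ S D) : u ≠ [] := by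
  cases D with
  | zero => simp [S_zero] at h
  | succ D => rcases mem_S_succ h with ⟨c, u', v', -, rfl, -⟩ | ⟨u', -, v', -, rfl, -⟩ <;> simp

def IsLeafChain (D : ℕ) (L : List (List Bool)) : Prop :=
  L ≠ [] ∧ L.IsChain (fun u v => (u, v) ∈ S D) ∧
    (∀ x ∈ L.head?, x ∈ Bl D) ∧ ∀ x ∈ L.getLast?, x ∈ Br D

theorem exists_leaves_eq_nil_cons {D : ℕ} {t : List (List Bool)}
    (h : ([] :: t).IsChain fun u v => (u, v) ∈ S D) : ∃ T ∈ trees D, T.leaves = [] :: t := by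
  refine ⟨leaf, mem_trees.2 (Nat.zero_le D), ?_⟩
  cases t with
  | nil => rfl
  | cons y t => exact absurd rfl (ne_nil_of_mem_S (isChain_cons_cons.1 h).1)

theorem exists_isChain_map_concat_true {D : ℕ} {x : List Bool} {t : List (List Bool)}
    (h : ((x ++ [true]) :: t).IsChain fun u v => (u, v) ∈ S (D + 1)) :
    ∃ B, (x :: B).IsChain (fun u v => (u, v) ∈ S D) ∧ t = B.map (· ++ [true]) := by
  induction t generalizing x with
  | nil => exact ⟨[], .singleton x, rfl⟩
  | cons y t ih =>
    rw [isChain_cons_cons] at h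
    rcases mem_S_succ h.1 with ⟨c, u', v', hS, hu, rfl⟩ | ⟨u', -, v', -, hu, -⟩
    · obtain ⟨rfl, ⟨⟩⟩ := append_inj' hu rfl
      obtain ⟨B, hB, rfl⟩ := ih h.2
      exact ⟨v' :: B, hB.cons_cons hS, rfl⟩
    · simp at hu

theorem exists_split_of_isChain {D : ℕ} {x : List Bool} {t : List (List Bool)}
    (hc : ((x ++ [false]) :: t).IsChain fun u v => (u, v) ∈ S (D + 1))
    (hl : ∀ z ∈ ((x ++ [false]) :: t).getLast?, z ∈ Br (D + 1)) :
    ∃ A B, (x :: A).IsChain (fun u v => (u, v) ∈ S D) ∧ (∀ z ∈ (x :: A).getLast?, z ∈ Br D) ∧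
      IsLeafChain D B ∧ t = A.map (· ++ [false]) ++ B.map (· ++ [true]) := by
  induction t generalizing x with
  | nil => exact absurd (hl _ rfl) concat_false_notMem_Br
  | cons y t ih =>
    rw [isChain_cons_cons] at hc
    rcases mem_S_succ hc.1 with ⟨c, u', v', hS, hu, rfl⟩ | ⟨u', hu', v', hv', hu, rfl⟩
    · obtain ⟨rfl, ⟨⟩⟩ := append_inj' hu rfl
      obtain ⟨A, B, hA, hAl, hB, rfl⟩ := ih hc.2 (by simpa [getLast?_cons_cons] using hl)
      exact ⟨v' :: A, B, hA.cons_cons hS, by simpa [getLast?_cons_cons] using hAl, hB, rfl⟩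
    · obtain ⟨rfl, -⟩ := append_inj' hu rfl
      obtain ⟨B, hB, rfl⟩ := exists_isChain_map_concat_true hc.2
      refine ⟨[], v' :: B, .singleton x, by simpa using hu',
        ⟨cons_ne_nil _ _, hB, by simpa using hv', fun z hz => concat_true_mem_Br_succ.1 (hl _ ?_)⟩,
        rfl⟩
      rw [getLast?_cons_cons,
        show (v' ++ [true]) :: B.map (· ++ [true]) = (v' :: B).map (· ++ [true]) from rfl,
        getLast?_map]
      exact Option.mem_map_of_mem _ hz

theorem exists_leaves_eq_of_isLeafChain {D : ℕ} {L : List (List Bool)} (hL : IsLeafChain D L) :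
    ∃ T ∈ trees D, T.leaves = L := by
  induction D generalizing L with
  | zero =>
    obtain ⟨hne, hc, hh, -⟩ := hL
    obtain ⟨x, t, rfl⟩ := exists_cons_of_ne_nil hne
    obtain ⟨k, hk, rfl⟩ := mem_Bl.1 (hh _ rfl)
    obtain rfl := Nat.le_zero.1 hk
    exact exists_leaves_eq_nil_cons hc
  | succ D ih =>
    obtain ⟨hne, hc, hh, hl⟩ := hL
    obtain ⟨x, t, rfl⟩ := exists_cons_of_ne_nil hne
    rcases mem_Bl_succ.1 (hh x rfl) with rfl | ⟨y, hy, rfl⟩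
    · exact exists_leaves_eq_nil_cons hc
    obtain ⟨A, B, hA, hAl, hB, rfl⟩ := exists_split_of_isChain hc hl
    obtain ⟨TA, hTA, hTAl⟩ := ih ⟨cons_ne_nil _ _, hA, by simpa using hy, hAl⟩
    obtain ⟨TB, hTB, hTBl⟩ := ih hB
    refine ⟨node TA TB, mem_trees.2 ?_, by simp [leaves, hTAl, hTBl]⟩
    simpa [depth] using ⟨mem_trees.1 hTA, mem_trees.1 hTB⟩

theorem isLeafChain_leaves {D : ℕ} {T : FBT} (hT : T ∈ trees D) : IsLeafChain D T.leaves := by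
  have hd := mem_trees.1 hT
  obtain ⟨k, hk, hhead⟩ := head?_leaves T
  obtain ⟨j, hj, hlast⟩ := getLast?_leaves T
  refine ⟨fun h => by simp [h] at hhead, ?_, ?_, ?_⟩
  · refine (isChain_mem_zip_tail T.leaves).imp fun u v h => transitions_subset_S hT ?_
    simpa [transitions] using h
  · rw [hhead]
    rintro x ⟨⟩
    exact mem_Bl.2 ⟨k, hk.trans hd, rfl⟩
  · rw [hlast]
    rintro x ⟨⟩
    exact mem_Br.2 ⟨j, hj.trans hd, rfl⟩

theorem isLeafChain_iff {D : ℕ} {L : List (List Bool)} :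
    IsLeafChain D L ↔ ∃ T ∈ trees D, T.leaves = L :=
  ⟨exists_leaves_eq_of_isLeafChain, fun ⟨_, hT, hL⟩ => hL ▸ isLeafChain_leaves hT⟩

section DynamicProgram

variable (St : Finset (List Bool × List Bool)) (B : Finset (List Bool))
  (w : ℕ → List Bool → NNReal) (mw : List Bool → NNReal)

def pathWeight (n : ℕ) (L : List (List Bool)) : NNReal :=
  ∏ i ∈ Finset.range n, w (i + 1) (L.getD i []) * mw (L.getD i [])

def paths : ℕ → List Bool → Finset (List (List Bool))
  | 0, _ => ∅
  | 1, v => if v ∈ B then {[v]} else ∅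
  | n + 2, v => (St.filter fun p => p.2 = v).biUnion fun p => (paths (n + 1) p.1).image (· ++ [v])

variable {St B w mw}

theorem pathWeight_concat {n : ℕ} {L : List (List Bool)} (hL : L.length = n) (v : List Bool) :
    pathWeight w mw (n + 1) (L ++ [v]) = pathWeight w mw n L * (w (n + 1) v * mw v) := by
  rw [pathWeight, Finset.prod_range_succ, getD_append_right _ _ _ _ hL.le, hL, Nat.sub_self]
  congr 1
  exact Finset.prod_congr rfl fun i hi => by
    rw [getD_append _ _ _ _ (hL ▸ Finset.mem_range.1 hi)]

theorem mem_paths {n : ℕ} {v : List Bool} {L : List (List Bool)} :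
    L ∈ paths St B n v ↔ L.length = n ∧ L.IsChain (fun a b => (a, b) ∈ St) ∧
      (∀ x ∈ L.head?, x ∈ B) ∧ L.getLast? = some v := by
  induction n using Nat.twoStepInduction generalizing v L with
  | zero => simp +contextual [paths]
  | one => by_cases hv : v ∈ B <;> rcases L with _ | ⟨x, _ | ⟨y, L⟩⟩ <;> aesop (add simp paths)
  | more n _ ih =>
    simp only [paths, Finset.mem_biUnion, Finset.mem_filter, Finset.mem_image, ih]
    rcases eq_nil_or_concat' L with rfl | ⟨L, x, rfl⟩
    · simp
    constructor
    · rintro ⟨⟨u, _⟩, ⟨hu, rfl⟩, L', ⟨hlen, hc, hh, hl⟩, he⟩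
      obtain ⟨rfl, ⟨⟩⟩ := append_inj' he rfl
      have hne : L' ≠ [] := by rintro rfl; simp at hlen
      exact ⟨by simp [hlen], hc.append (.singleton _) (by simpa [hl]),
        by rwa [head?_append_of_ne_nil _ hne], by simp⟩
    · rintro ⟨hlen, hc, hh, hl⟩
      obtain rfl : x = v := by simpa using hl
      obtain ⟨hc, -, hrel⟩ := isChain_append.1 hc
      obtain ⟨L', u, rfl⟩ := (eq_nil_or_concat' L).resolve_left (by rintro rfl; simp at hlen)
      rw [head?_append_of_ne_nil _ (by simp)] at hh
      exact ⟨(u, x), ⟨hrel u (by simp) x rfl, rfl⟩, L' ++ [u],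
        ⟨by simpa using hlen, hc, hh, by simp⟩, rfl⟩

variable (St B)

theorem Mstar_eq_sup_paths (n : ℕ) (v : List Bool) :
    Mstar St B w mw n v = (paths St B n v).sup (pathWeight w mw n) := by
  induction n using Nat.twoStepInduction generalizing v with
  | zero => simp [Mstar, paths]
  | one => by_cases hv : v ∈ B <;> simp [Mstar, paths, hv, pathWeight]
  | more n _ ih =>
    rw [Mstar, paths, Finset.sup_biUnion, NNReal.mul_finset_sup]
    refine Finset.sup_congr rfl fun p _ => ?_
    rw [ih, NNReal.mul_finset_sup, Finset.sup_image]
    refine Finset.sup_congr rfl fun L hL => ?_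
    rw [Function.comp_apply, pathWeight_concat (mem_paths.1 hL).1, mul_comm]

end DynamicProgram

theorem biUnion_paths_eq_image_leaves (D N : ℕ) :
    (Br D).biUnion (paths (S D) (Bl D) N) =
      ((trees D).filter fun T => T.leaves.length = N).image leaves := by
  ext L
  have hpaths : (∃ v ∈ Br D, L ∈ paths (S D) (Bl D) N v) ↔ IsLeafChain D L ∧ L.length = N := by
    simp only [mem_paths]
    constructor
    · rintro ⟨v, hv, hlen, hc, hh, hl⟩
      exact ⟨⟨by rintro rfl; simp at hl, hc, hh, by simpa [hl]⟩, hlen⟩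
    · rintro ⟨⟨hne, hc, hh, hl⟩, hlen⟩
      have hlast := getLast?_eq_some_getLast hne
      exact ⟨_, hl _ hlast, hlen, hc, hh, hlast⟩
  simp only [Finset.mem_biUnion, hpaths, isLeafChain_iff, Finset.mem_image, Finset.mem_filter]
  grind

end FBT

theorem stmt15_general (D N : ℕ) (w : ℕ → List Bool → NNReal)
    (mw : List Bool → NNReal) :
    (FBT.Br D).sup (fun v => FBT.Mstar (FBT.S D) (FBT.Bl D) w mw N v) =
      ((FBT.trees D).filter (fun T => T.leaves.length = N)).sup
        (fun T => ∏ n ∈ Finset.range N,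
          w (n + 1) (T.leaves.getD n []) * mw (T.leaves.getD n [])) := by
  simp_rw [FBT.Mstar_eq_sup_paths, ← Finset.sup_biUnion, FBT.biUnion_paths_eq_image_leaves,
    Finset.sup_image]
  rfl

/-- correctness of the Viterbi-style max-product dynamic
program: the max of the DP table over the right boundary equals the maximum,
over internal trees with `N` leaves, of the product of weights at their
leaves. -/
theorem stmt15 (D N : ℕ) (hN : 1 ≤ N) (w : ℕ → List Bool → NNReal)
    (mw : List Bool → NNReal) :
    (FBT.Br D).sup (fun v => FBT.Mstar (FBT.S D) (FBT.Bl D) w mw N v) =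
      ((FBT.trees D).filter (fun T => T.leaves.length = N)).sup
        (fun T => ∏ n ∈ Finset.range N,
          w (n + 1) (T.leaves.getD n []) * mw (T.leaves.getD n [])) :=
  stmt15_general D N w mw
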